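/- A binary cluster tree T over a dataset X has dendrogram purity 1 with respect to C* if and only if for every ground-truth cluster C ∈ C* there exists a node v of T with lvs(v) = C. -/
import Mathlib


open scoped Classical

inductive CTree (α : Type*) where
  | leaf (x : α) : CTree α
  | node (l r : CTree α) : CTree α

namespace CTree

variable {α : Type*}

/-- The set of data points (descendant leaves) of a node. -/
noncomputable def lvs : CTree α → Finset α
  | leaf x => {x}
  | node l r => lvs l ∪ lvs r

theorem lvs_nonempty (t : CTree α) : t.lvs.Nonempty := by
  induction t with
  | leaf x => exact ⟨x, by simp [lvs]⟩
  | node l r ihl ihr => exact ihl.mono (by simp [lvs])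

/-- `Sub s t` : `s` is a subtree (node) of `t`. -/
inductive Sub : CTree α → CTree α → Prop
  | refl (t : CTree α) : Sub t t
  | left {s l r : CTree α} : Sub s l → Sub s (node l r)
  | right {s l r : CTree α} : Sub s r → Sub s (node l r)

/-- Least common ancestor (as a subtree) of two data points. -/
noncomputable def lca : CTree α → α → α → CTree α
  | leaf a, _, _ => leaf a
  | node l r, x, y =>
      if x ∈ lvs l ∧ y ∈ lvs l then lca l x y
      else if x ∈ lvs r ∧ y ∈ lvs r then lca r x y
      else node l r

/-- Dendrogram purity 1: for every same-cluster pair, all leaves below their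
least common ancestor belong to that cluster. -/
def PurityOne (C : α → ℕ) (t : CTree α) : Prop :=
  ∀ x ∈ t.lvs, ∀ y ∈ t.lvs, x ≠ y → C x = C y → ∀ z ∈ (t.lca x y).lvs, C z = C x

/-- A dataset `X` is separable w.r.t. a ground-truth clustering `C`:
every within-cluster distance is strictly smaller than every between-cluster distance. -/
def Separable [MetricSpace α] (X : Finset α) (C : α → ℕ) : Prop :=
  ∀ x ∈ X, ∀ y ∈ X, ∀ x' ∈ X, ∀ y' ∈ X,
    x ≠ y → C x = C y → C x' ≠ C y' → dist x y < dist x' y'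

/-- A node `v` with sibling `v'` and aunt `a` is masked if some `x ∈ lvs v` is farther
from some point of `v'` than from some point of `a`
(i.e. `max_{y ∈ lvs v'} ‖x-y‖ > min_{z ∈ lvs a} ‖x-z‖`). -/
def Masked [MetricSpace α] (v v' a : CTree α) : Prop :=
  ∃ x ∈ v.lvs,
    (a.lvs.inf' (lvs_nonempty a) fun z => dist x z) <
      (v'.lvs.sup' (lvs_nonempty v') fun y => dist x y)

theorem sub_trans {a b c : CTree α} (h1 : Sub a b) (h2 : Sub b c) : Sub a c := by
  induction h2 with
  | refl => exact h1
  | left _ ih => exact .left ih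
  | right _ ih => exact .right ih

theorem lvs_subset_of_sub {s t : CTree α} (h : Sub s t) : s.lvs ⊆ t.lvs := by
  induction h with
  | refl => exact Finset.Subset.refl _
  | left _ ih => exact ih.trans (by simp [lvs])
  | right _ ih => exact ih.trans (by simp [lvs])

theorem lca_sub_self (t : CTree α) (x y : α) : Sub (t.lca x y) t := by
  induction t with
  | leaf a => exact .refl _
  | node l r ihl ihr =>
    simp only [lca]
    split_ifs with h1 h2
    · exact .left ihl
    · exact .right ihr
    · exact .refl _

theorem lca_eq {x y : α} {s t : CTree α} (hs : Sub s t)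
    (hdisj : ∀ a b, Sub (node a b) t → Disjoint (lvs a) (lvs b))
    (hx : x ∈ s.lvs) (hy : y ∈ s.lvs) : lca t x y = lca s x y := by
  induction hs with
  | refl => rfl
  | @left l r h ih =>
    have hd := hdisj l r (.refl _)
    have hxl : x ∈ l.lvs := lvs_subset_of_sub h hx
    have hyl : y ∈ l.lvs := lvs_subset_of_sub h hy
    simp only [lca]
    rw [if_pos ⟨hxl, hyl⟩]
    exact ih (fun a b hab => hdisj a b (.left hab))
  | @right l r h ih =>
    have hd := hdisj l r (.refl _)
    have hxr : x ∈ r.lvs := lvs_subset_of_sub h hx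
    have hyr : y ∈ r.lvs := lvs_subset_of_sub h hy
    have hnl : ¬(x ∈ l.lvs ∧ y ∈ l.lvs) :=
      fun hc => Finset.disjoint_left.mp hd hc.1 hxr
    simp only [lca]
    rw [if_neg hnl, if_pos ⟨hxr, hyr⟩]
    exact ih (fun a b hab => hdisj a b (.right hab))

theorem exists_node_of_purity (C : α → ℕ) (T : CTree α)
    (hdisj : ∀ l r : CTree α, Sub (CTree.node l r) T → Disjoint l.lvs r.lvs)
    (hp : PurityOne C T) (k : ℕ) :
    ∀ t, Sub t T → (T.lvs.filter fun x => C x = k).Nonempty →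
      (T.lvs.filter fun x => C x = k) ⊆ t.lvs →
      ∃ s, Sub s t ∧ s.lvs = T.lvs.filter fun x => C x = k := by
  set K := T.lvs.filter fun x => C x = k with hK
  intro t
  induction t with
  | leaf a =>
    intro _ hne hsub
    obtain ⟨x0, hx0⟩ := hne
    refine ⟨leaf a, .refl _, ?_⟩
    have : x0 = a := by simpa [lvs] using hsub hx0
    apply Finset.Subset.antisymm _ hsub
    simp only [lvs, Finset.singleton_subset_iff]
    exact this ▸ hx0
  | node l r ihl ihr =>
    intro ht hne hsub
    by_cases hl : K ⊆ l.lvs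
    · obtain ⟨s, hs, hslvs⟩ := ihl (sub_trans (.left (.refl l)) ht) hne hl
      exact ⟨s, .left hs, hslvs⟩
    by_cases hr : K ⊆ r.lvs
    · obtain ⟨s, hs, hslvs⟩ := ihr (sub_trans (.right (.refl r)) ht) hne hr
      exact ⟨s, .right hs, hslvs⟩
    obtain ⟨x, hxK, hxl⟩ := Finset.not_subset.mp hl
    obtain ⟨y, hyK, hyr⟩ := Finset.not_subset.mp hr
    have hxn : x ∈ (node l r).lvs := hsub hxK
    have hyn : y ∈ (node l r).lvs := hsub hyK
    have hxr : x ∈ r.lvs := by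
      simp only [lvs, Finset.mem_union] at hxn
      tauto
    have hyl : y ∈ l.lvs := by
      simp only [lvs, Finset.mem_union] at hyn
      tauto
    have hxy : x ≠ y := fun h => hxl (h ▸ hyl)
    have hCx : C x = k := (Finset.mem_filter.mp hxK).2
    have hCy : C y = k := (Finset.mem_filter.mp hyK).2
    have hxT : x ∈ T.lvs := (Finset.mem_filter.mp hxK).1
    have hyT : y ∈ T.lvs := (Finset.mem_filter.mp hyK).1
    have hlca : lca T x y = node l r := by
      rw [lca_eq ht hdisj hxn hyn]
      simp only [lca]
      rw [if_neg (fun hc => hxl hc.1), if_neg (fun hc => hyr hc.2)]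
    have hpure := hp x hxT y hyT hxy (hCx.trans hCy.symm)
    rw [hlca] at hpure
    refine ⟨node l r, .refl _, Finset.Subset.antisymm ?_ hsub⟩
    intro z hz
    exact Finset.mem_filter.mpr ⟨lvs_subset_of_sub ht hz, (hpure z hz).trans hCx⟩

end CTree

abbrev Euc (d : ℕ) := EuclideanSpace ℝ (Fin d)

open CTree in
/-- a binary cluster tree has dendrogram purity 1 w.r.t. `C` iff every
ground-truth cluster (restricted to the leaves of the tree) is exactly the leaf set of
some node of the tree. -/
theorem purity_one_iff_clusters_are_nodes {d : ℕ} (C : Euc d → ℕ) (T : CTree (Euc d))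
    (hdisj : ∀ l r : CTree (Euc d), Sub (CTree.node l r) T → Disjoint l.lvs r.lvs) :
    PurityOne C T ↔
      ∀ k ∈ T.lvs.image C, ∃ s, Sub s T ∧ s.lvs = T.lvs.filter fun x => C x = k := by
  constructor
  · intro hp k hk
    obtain ⟨x0, hx0, hCx0⟩ := Finset.mem_image.mp hk
    exact exists_node_of_purity C T hdisj hp k T (.refl _)
      ⟨x0, Finset.mem_filter.mpr ⟨hx0, hCx0⟩⟩ (Finset.filter_subset _ _)
  · intro h x hx y hy hxy hCeq z hz
    obtain ⟨s, hsT, hslvs⟩ := h (C x) (Finset.mem_image.mpr ⟨x, hx, rfl⟩)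
    have hxs : x ∈ s.lvs := hslvs ▸ Finset.mem_filter.mpr ⟨hx, rfl⟩
    have hys : y ∈ s.lvs := hslvs ▸ Finset.mem_filter.mpr ⟨hy, hCeq.symm⟩
    rw [lca_eq hsT hdisj hxs hys] at hz
    have := lvs_subset_of_sub (lca_sub_self s x y) hz
    rw [hslvs] at this
    exact (Finset.mem_filter.mp this).2
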